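/- With B as defined via the cyclic shift (B(e_i) = π J^i ι on U ⊂ ℂⁿ), for all u, v, w ∈ U one has u ∧ v ∧ [B(u),B(v)](w) = 0 in Λ³U, i.e. [B(u),B(v)](w) always lies in the span of u and v. -/

import Mathlib

/-! With `A(u) = Σᵢ uᵢ J^{i+1}` (a circulant matrix) one has `B(u) = π A(u) ι`, and
`ι π = 1 - eₙ eₙ*` on `ℂⁿ`. Since `A(u) eₙ = u`, this gives
`B(u) B(v) w = π A(u) A(v) w - (A(v) w)ₙ u`. Circulant matrices commute, so the first term
cancels in the commutator, leaving `(A(u) w)ₙ v - (A(v) w)ₙ u`. -/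

/-- Projection of `ℂⁿ` (with `n = m+1`) onto `U = span(e₁,…,e_{n-1})` along the last
basis vector `eₙ`: it kills the last coordinate. -/
def cyclicProj (m : ℕ) (v : Fin (m + 1) → ℂ) : Fin (m + 1) → ℂ :=
  fun k => if k = Fin.last m then 0 else v k

/-- The map `B : U → End(U)` determined by `B(e_i) = π ∘ Jⁱ ∘ ι` for `1 ≤ i ≤ n−1`,
where `J` is the cyclic shift `J e_i = e_{i+1}` (indices mod `n`), `ι : U → ℂⁿ` the
inclusion and `π` the projection along `eₙ`; zero-based indices, so
`B(u)(w) = Σ_i u_i · π (J^{i+1} (ι w))`. -/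
noncomputable def cyclicB (m : ℕ) (u : Fin (m + 1) → ℂ) (w : Fin (m + 1) → ℂ) :
    Fin (m + 1) → ℂ :=
  cyclicProj m (fun k => ∑ i : Fin (m + 1), u i * cyclicProj m w (k - (i + 1)))

open Matrix

/-- The matrix `Σᵢ uᵢ J^{i+1}` of the cyclic shift `J`. -/
def shiftCirculant {R : Type*} (m : ℕ) (u : Fin (m + 1) → R) :
    Matrix (Fin (m + 1)) (Fin (m + 1)) R :=
  circulant fun j => u (j - 1)

theorem shiftCirculant_mul_comm {R : Type*} [CommSemiring R] (m : ℕ) (u v : Fin (m + 1) → R) :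
    shiftCirculant m u * shiftCirculant m v = shiftCirculant m v * shiftCirculant m u :=
  circulant_mul_comm _ _

theorem shiftCirculant_mulVec_single_last {R : Type*} [CommSemiring R] (m : ℕ)
    (u : Fin (m + 1) → R) : shiftCirculant m u *ᵥ Pi.single (Fin.last m) 1 = u := by
  ext k
  simp [shiftCirculant, sub_sub, Fin.last_add_one]

theorem cyclicProj_of_last_eq_zero (m : ℕ) {x : Fin (m + 1) → ℂ} (hx : x (Fin.last m) = 0) :
    cyclicProj m x = x := by
  ext k
  by_cases hk : k = Fin.last m <;> simp [cyclicProj, hk, hx]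

theorem cyclicProj_eq_sub_smul_single (m : ℕ) (x : Fin (m + 1) → ℂ) :
    cyclicProj m x = x - x (Fin.last m) • Pi.single (Fin.last m) 1 := by
  ext k
  by_cases hk : k = Fin.last m <;> simp [cyclicProj, hk]

theorem cyclicProj_sub_smul (m : ℕ) (x y : Fin (m + 1) → ℂ) (c : ℂ) :
    cyclicProj m (x - c • y) = cyclicProj m x - c • cyclicProj m y := by
  ext k
  by_cases hk : k = Fin.last m <;> simp [cyclicProj, hk]

theorem cyclicB_apply_last (m : ℕ) (u w : Fin (m + 1) → ℂ) :
    cyclicB m u w (Fin.last m) = 0 := by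
  simp [cyclicB, cyclicProj]

theorem cyclicB_eq_cyclicProj_mulVec (m : ℕ) (u w : Fin (m + 1) → ℂ) :
    cyclicB m u w = cyclicProj m (shiftCirculant m u *ᵥ cyclicProj m w) := by
  unfold cyclicB
  congr 1
  ext k
  refine Fintype.sum_equiv ((Equiv.addRight 1).trans (Equiv.subLeft k)) _ _ fun i => ?_
  simp [shiftCirculant]

theorem cyclicB_cyclicB (m : ℕ) {u w : Fin (m + 1) → ℂ} (hu : u (Fin.last m) = 0)
    (hw : w (Fin.last m) = 0) (v : Fin (m + 1) → ℂ) :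
    cyclicB m u (cyclicB m v w) =
      cyclicProj m ((shiftCirculant m u * shiftCirculant m v) *ᵥ w) -
        (shiftCirculant m v *ᵥ w) (Fin.last m) • u := by
  set y := shiftCirculant m v *ᵥ w
  have hBvw : cyclicB m v w = y - y (Fin.last m) • Pi.single (Fin.last m) 1 := by
    rw [cyclicB_eq_cyclicProj_mulVec, cyclicProj_of_last_eq_zero m hw,
      cyclicProj_eq_sub_smul_single]
  rw [cyclicB_eq_cyclicProj_mulVec, cyclicProj_of_last_eq_zero m (cyclicB_apply_last m v w),
    hBvw, mulVec_sub, mulVec_smul, shiftCirculant_mulVec_single_last, cyclicProj_sub_smul,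
    cyclicProj_of_last_eq_zero m hu, ← mulVec_mulVec]

/-- For all `u, v, w ∈ U`, the vector `[B(u),B(v)](w)` lies in the span of `u` and
`v` (equivalently, `u ∧ v ∧ [B(u),B(v)](w) = 0` in `Λ³U`). -/
theorem cyclicB_commutator_mem_span (m : ℕ) (u v w : Fin (m + 1) → ℂ)
    (hu : u (Fin.last m) = 0) (hv : v (Fin.last m) = 0) (hw : w (Fin.last m) = 0) :
    cyclicB m u (cyclicB m v w) - cyclicB m v (cyclicB m u w) ∈
      Submodule.span ℂ ({u, v} : Set (Fin (m + 1) → ℂ)) := by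
  rw [cyclicB_cyclicB m hu hw, cyclicB_cyclicB m hv hw, shiftCirculant_mul_comm,
    sub_sub_sub_cancel_left]
  exact sub_mem
    (Submodule.smul_mem _ _ (Submodule.subset_span (Set.mem_insert_of_mem _ rfl)))
    (Submodule.smul_mem _ _ (Submodule.subset_span (Set.mem_insert _ _)))
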